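/- (Gradient approximation bound) Let ρ★ = U★ U★^H where U★ ∈ ℂ^{D×r} satisfies ‖U★‖_F = 1, and suppose the measurement map 𝒜 satisfies the (3r, δ)-RIP. Let ŷ ∈ ℝ^K, e_k = ŷ_k − trace(A_k ρ★). If U ∈ ℂ^{D×r} satisfies min_{R' unitary} ‖U − U★R'‖_F ≤ σ_r(U★)/4, then ‖G(U) − (U U^H − ρ★)·U‖_F ≤ (5δ/2)·‖U U^H − ρ★‖_F + (5D/(4K))·‖𝒜*(e)‖. -/

import Mathlib

open Matrix
open scoped BigOperators ComplexOrder

/-- Frobenius norm of a complex matrix. -/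
noncomputable def frobNorm {m n : ℕ} (A : Matrix (Fin m) (Fin n) ℂ) : ℝ :=
  Real.sqrt (∑ i, ∑ j, ‖A i j‖ ^ 2)

/-- Spectral norm (largest singular value) of a complex matrix, as the operator
norm of the induced map between Euclidean spaces. -/
noncomputable def specNorm {m n : ℕ} (A : Matrix (Fin m) (Fin n) ℂ) : ℝ :=
  ‖LinearMap.toContinuousLinearMap (Matrix.toEuclideanLin A)‖

/-- The measurement map `𝒜(ρ)_k = trace (A k * ρ)` satisfies the `(s, δ)`-RIP. -/
def IsRIP {D K : ℕ} (A : Fin K → Matrix (Fin D) (Fin D) ℂ) (s : ℕ) (δ : ℝ) : Prop :=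
  ∀ ρ : Matrix (Fin D) (Fin D) ℂ, ρ.rank ≤ s →
    (1 - δ) * frobNorm ρ ^ 2 ≤ ((D : ℝ) / (K : ℝ)) * ∑ k, ‖Matrix.trace (A k * ρ)‖ ^ 2 ∧
      ((D : ℝ) / (K : ℝ)) * ∑ k, ‖Matrix.trace (A k * ρ)‖ ^ 2 ≤ (1 + δ) * frobNorm ρ ^ 2

/-- The adjoint of the measurement map: `𝒜*(e) = Σ_k e_k A_k`. -/
noncomputable def adjointMap {D K : ℕ} (A : Fin K → Matrix (Fin D) (Fin D) ℂ)
    (e : Fin K → ℝ) : Matrix (Fin D) (Fin D) ℂ :=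
  ∑ k, (e k : ℂ) • A k

/-- The Wirtinger gradient `G(U) = (D/K) Σ_k (trace(A_k U Uᴴ) − ŷ_k) A_k U`. -/
noncomputable def wGrad {D K r : ℕ} (A : Fin K → Matrix (Fin D) (Fin D) ℂ)
    (yhat : Fin K → ℝ) (U : Matrix (Fin D) (Fin r) ℂ) : Matrix (Fin D) (Fin r) ℂ :=
  ((D : ℂ) / (K : ℂ)) • ∑ k, (Matrix.trace (A k * (U * Uᴴ)) - (yhat k : ℂ)) • (A k * U)

/-- The Wirtinger Hessian quadratic form at `U` in direction `Δ`. -/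
noncomputable def wHess {D K r : ℕ} (A : Fin K → Matrix (Fin D) (Fin D) ℂ)
    (yhat : Fin K → ℝ) (U Δ : Matrix (Fin D) (Fin r) ℂ) : ℝ :=
  (2 * (D : ℝ) / (K : ℝ)) * ∑ k, (‖Matrix.trace (A k * (U * Δᴴ))‖ ^ 2
      + ((Matrix.trace (A k * (U * Δᴴ))) ^ 2).re)
    + (2 * (D : ℝ) / (K : ℝ)) *
      (Matrix.trace ((∑ k, (Matrix.trace (A k * (U * Uᴴ)) - (yhat k : ℂ)) • A k)
        * (Δ * Δᴴ))).re

/-- The function `h(δ)` from the recovery-error bound. -/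
noncomputable def hfun (δ : ℝ) : ℝ :=
  (Real.sqrt 2 + Real.sqrt (82.55 - 762.54 * δ - 843.09 * δ ^ 2)) / (1.5 - 15.7 * δ)

/-- The smallest singular value `σ_r(X)`: the square root of the smallest
eigenvalue of `Xᴴ X`. -/
noncomputable def sigmaMin {D r : ℕ} (X : Matrix (Fin D) (Fin r) ℂ) : ℝ :=
  Real.sqrt (⨅ i : Fin r, (Matrix.isHermitian_conjTranspose_mul_self X).eigenvalues i)

/-!
Write `Z = U Uᴴ - ρ★`. Since `ŷ_k = trace (A_k ρ★) + e_k`, the gradient error splits as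
`((D/K) 𝒜*𝒜 - id)(Z) U - (D/K) 𝒜*(e) U`. Polarizing the RIP inequality shows that
`|Re ⟨W, ((D/K) 𝒜*𝒜 - id) Z⟩_F| ≤ δ ‖W‖_F ‖Z‖_F` whenever `rank W + rank Z ≤ 3r`; taking
`W = ((D/K) 𝒜*𝒜 - id)(Z) U Uᴴ`, of rank at most `r`, bounds the first term by `δ ‖Z‖_F ‖U‖_F`.
The second term is at most `(D/K) ‖𝒜*(e)‖ ‖U‖_F`, and
`‖U‖_F ≤ ‖U★ R‖_F + σ_r(U★)/4 ≤ 5/4` because `σ_r(U★) ≤ ‖U★‖_F = 1`.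
-/
open scoped ComplexConjugate InnerProductSpace

section RestrictedIsometry

variable {𝕜 M E F : Type*} [RCLike 𝕜] [AddCommGroup M] [Module 𝕜 M]
  [NormedAddCommGroup E] [InnerProductSpace 𝕜 E] [NormedAddCommGroup F] [InnerProductSpace 𝕜 F]
  (f : M →ₗ[𝕜] F) (g : M →ₗ[𝕜] E) {δ : ℝ}

theorem abs_re_inner_sub_re_inner_le_of_add_of_sub {u v : M}
    (hadd : |‖f (u + v)‖ ^ 2 - ‖g (u + v)‖ ^ 2| ≤ δ * ‖g (u + v)‖ ^ 2)
    (hsub : |‖f (u - v)‖ ^ 2 - ‖g (u - v)‖ ^ 2| ≤ δ * ‖g (u - v)‖ ^ 2) :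
    |RCLike.re ⟪f u, f v⟫_𝕜 - RCLike.re ⟪g u, g v⟫_𝕜| ≤ δ / 2 * (‖g u‖ ^ 2 + ‖g v‖ ^ 2) := by
  rw [map_add, map_add] at hadd
  rw [map_sub, map_sub] at hsub
  rw [re_inner_eq_norm_add_mul_self_sub_norm_sub_mul_self_div_four,
    re_inner_eq_norm_add_mul_self_sub_norm_sub_mul_self_div_four]
  have hpar : δ * (‖g u + g v‖ ^ 2 + ‖g u - g v‖ ^ 2) = 2 * δ * (‖g u‖ ^ 2 + ‖g v‖ ^ 2) := by
    rw [parallelogram_law_with_norm 𝕜]; ring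
  rw [abs_le] at hadd hsub ⊢
  simp only [← sq]
  constructor <;> linarith [hadd.1, hadd.2, hsub.1, hsub.2]

theorem abs_re_inner_sub_re_inner_le {x y : M}
    (h : ∀ a b : ℝ, |‖f ((a : 𝕜) • x + (b : 𝕜) • y)‖ ^ 2 - ‖g ((a : 𝕜) • x + (b : 𝕜) • y)‖ ^ 2|
      ≤ δ * ‖g ((a : 𝕜) • x + (b : 𝕜) • y)‖ ^ 2) :
    |RCLike.re ⟪f x, f y⟫_𝕜 - RCLike.re ⟪g x, g y⟫_𝕜| ≤ δ * ‖g x‖ * ‖g y‖ := by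
  have hf_eq_zero {z : M} (hz : g z = 0)
      (hbound : |‖f z‖ ^ 2 - ‖g z‖ ^ 2| ≤ δ * ‖g z‖ ^ 2) : f z = 0 := by
    simp only [hz, norm_zero] at hbound
    simpa using hbound
  rcases eq_or_ne (g x) 0 with hx | hx
  · simp [hx, hf_eq_zero hx (by simpa using h 1 0)]
  rcases eq_or_ne (g y) 0 with hy | hy
  · simp [hy, hf_eq_zero hy (by simpa using h 0 1)]
  -- rescale `x` and `y` to the same `g`-norm `‖g x‖ * ‖g y‖`
  set a := ‖g y‖
  set b := ‖g x‖
  have ha : 0 < a := norm_pos_iff.mpr hy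
  have hb : 0 < b := norm_pos_iff.mpr hx
  have key := abs_re_inner_sub_re_inner_le_of_add_of_sub f g (u := (a : 𝕜) • x) (v := (b : 𝕜) • y)
    (h a b) (by simpa [sub_eq_add_neg] using h a (-b))
  simp only [map_smul, inner_smul_left, inner_smul_right, RCLike.conj_ofReal, ← mul_assoc,
    ← RCLike.ofReal_mul, RCLike.re_ofReal_mul, norm_smul, RCLike.norm_ofReal, abs_of_pos ha,
    abs_of_pos hb, ← mul_sub, abs_mul] at key
  have hab : 0 < a * b := mul_pos ha hb
  nlinarith

end RestrictedIsometry

section Frobenius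

variable {l m n : ℕ}

def toEuclideanVec : Matrix (Fin m) (Fin n) ℂ →ₗ[ℂ] EuclideanSpace ℂ (Fin m × Fin n) where
  toFun X := WithLp.toLp 2 fun p => X p.1 p.2
  map_add' _ _ := rfl
  map_smul' _ _ := rfl

theorem norm_toEuclideanVec (X : Matrix (Fin m) (Fin n) ℂ) :
    ‖toEuclideanVec X‖ = frobNorm X := by
  rw [EuclideanSpace.norm_eq, frobNorm, Fintype.sum_prod_type]
  rfl

theorem inner_toEuclideanVec (X Y : Matrix (Fin m) (Fin n) ℂ) :
    ⟪toEuclideanVec X, toEuclideanVec Y⟫_ℂ = trace (Xᴴ * Y) := by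
  simp only [PiLp.inner_apply, RCLike.inner_apply', Fintype.sum_prod_type, trace, diag_apply,
    mul_apply, conjTranspose_apply]
  rw [Finset.sum_comm]
  rfl

theorem frobNorm_nonneg (X : Matrix (Fin m) (Fin n) ℂ) : 0 ≤ frobNorm X :=
  Real.sqrt_nonneg _

theorem frobNorm_sq (X : Matrix (Fin m) (Fin n) ℂ) :
    frobNorm X ^ 2 = (trace (Xᴴ * X)).re := by
  rw [← norm_toEuclideanVec, ← inner_toEuclideanVec, ← inner_self_eq_norm_sq (𝕜 := ℂ)]
  rfl

theorem frobNorm_add_le (X Y : Matrix (Fin m) (Fin n) ℂ) :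
    frobNorm (X + Y) ≤ frobNorm X + frobNorm Y := by
  simpa only [← norm_toEuclideanVec, map_add] using norm_add_le _ _

theorem frobNorm_sub_le (X Y : Matrix (Fin m) (Fin n) ℂ) :
    frobNorm (X - Y) ≤ frobNorm X + frobNorm Y := by
  simpa only [← norm_toEuclideanVec, map_sub] using norm_sub_le _ _

theorem frobNorm_smul (c : ℂ) (X : Matrix (Fin m) (Fin n) ℂ) :
    frobNorm (c • X) = ‖c‖ * frobNorm X := by
  simp only [← norm_toEuclideanVec, map_smul, norm_smul]

section FrobeniusNorm

attribute [local instance] Matrix.frobeniusNormedAddCommGroup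

theorem frobNorm_eq_norm (X : Matrix (Fin m) (Fin n) ℂ) : frobNorm X = ‖X‖ := by
  rw [frobenius_norm_def, frobNorm, Real.sqrt_eq_rpow]
  norm_cast

theorem frobNorm_mul_le (X : Matrix (Fin l) (Fin m) ℂ) (Y : Matrix (Fin m) (Fin n) ℂ) :
    frobNorm (X * Y) ≤ frobNorm X * frobNorm Y := by
  simpa only [frobNorm_eq_norm] using frobenius_norm_mul X Y

theorem frobNorm_conjTranspose (X : Matrix (Fin m) (Fin n) ℂ) : frobNorm Xᴴ = frobNorm X := by
  simpa only [frobNorm_eq_norm] using frobenius_norm_conjTranspose X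

end FrobeniusNorm

theorem frobNorm_mul_unitary (X : Matrix (Fin m) (Fin n) ℂ) {R : Matrix (Fin n) (Fin n) ℂ}
    (hR : Rᴴ * R = 1) : frobNorm (X * R) = frobNorm X := by
  have hR' : R * Rᴴ = 1 := mul_eq_one_comm.mp hR
  have htrace : trace ((X * R)ᴴ * (X * R)) = trace (Xᴴ * X) := by
    rw [trace_mul_comm, conjTranspose_mul, Matrix.mul_assoc, ← Matrix.mul_assoc R, hR',
      Matrix.one_mul, trace_mul_comm]
  rw [← sq_eq_sq₀ (frobNorm_nonneg _) (frobNorm_nonneg _), frobNorm_sq, frobNorm_sq, htrace]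

theorem frobNorm_sq_eq_sum_norm_col_sq (X : Matrix (Fin m) (Fin n) ℂ) :
    frobNorm X ^ 2 = ∑ j, ‖WithLp.toLp 2 (Xᵀ j)‖ ^ 2 := by
  rw [frobNorm, Real.sq_sqrt (by positivity), Finset.sum_comm]
  simp only [EuclideanSpace.norm_sq_eq, transpose_apply]

theorem frobNorm_mul_le_specNorm_mul (N : Matrix (Fin l) (Fin m) ℂ)
    (X : Matrix (Fin m) (Fin n) ℂ) : frobNorm (N * X) ≤ specNorm N * frobNorm X := by
  have hcol (j : Fin n) : ‖WithLp.toLp 2 ((N * X)ᵀ j)‖ ≤ specNorm N * ‖WithLp.toLp 2 (Xᵀ j)‖ :=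
    (LinearMap.toContinuousLinearMap (toEuclideanLin N)).le_opNorm (WithLp.toLp 2 (Xᵀ j))
  refine le_of_sq_le_sq ?_ (mul_nonneg (norm_nonneg _) (frobNorm_nonneg X))
  rw [mul_pow, frobNorm_sq_eq_sum_norm_col_sq, frobNorm_sq_eq_sum_norm_col_sq, Finset.mul_sum]
  gcongr with j
  rw [← mul_pow]
  exact pow_le_pow_left₀ (norm_nonneg _) (hcol j) 2

theorem sigmaMin_le_frobNorm (X : Matrix (Fin m) (Fin n) ℂ) : sigmaMin X ≤ frobNorm X := by
  set hX := isHermitian_conjTranspose_mul_self X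
  have hev (i : Fin n) : 0 ≤ hX.eigenvalues i :=
    (posSemidef_conjTranspose_mul_self X).eigenvalues_nonneg i
  have hsum : ∑ i, hX.eigenvalues i = frobNorm X ^ 2 := by
    rw [frobNorm_sq, hX.trace_eq_sum_eigenvalues, Complex.re_sum]
    simp
  have hinf : ⨅ i, hX.eigenvalues i ≤ ∑ i, hX.eigenvalues i := by
    cases isEmpty_or_nonempty (Fin n) with
    | inl _ => simp [Real.iInf_of_isEmpty]
    | inr hne =>
      obtain ⟨i⟩ := hne
      exact (ciInf_le (Finite.bddBelow_range _) i).trans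
        (Finset.single_le_sum (fun i _ => hev i) (Finset.mem_univ i))
  rw [sigmaMin, ← Real.sqrt_sq (frobNorm_nonneg X), ← hsum]
  exact Real.sqrt_le_sqrt hinf

end Frobenius

namespace Matrix

variable {R : Type*} {m n : Type*} [Fintype n]

theorem rank_add_le [Field R] (X Y : Matrix m n R) : (X + Y).rank ≤ X.rank + Y.rank := by
  unfold rank
  rw [mulVecLin_add]
  calc Module.finrank R (LinearMap.range (X.mulVecLin + Y.mulVecLin))
      ≤ Module.finrank R ↥(LinearMap.range X.mulVecLin ⊔ LinearMap.range Y.mulVecLin) :=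
        Submodule.finrank_mono (LinearMap.range_add_le _ _)
    _ ≤ _ := Submodule.finrank_add_le_finrank_add_finrank _ _

theorem rank_smul_le [CommRing R] [StrongRankCondition R] (c : R) (X : Matrix m n R) :
    (c • X).rank ≤ X.rank := by
  classical
  have hX : c • X = X * (c • 1 : Matrix n n R) := by rw [Matrix.mul_smul, Matrix.mul_one]
  rw [hX]
  exact rank_mul_le_left _ _

theorem rank_sub_le [Field R] (X Y : Matrix m n R) : (X - Y).rank ≤ X.rank + Y.rank := by
  rw [sub_eq_add_neg, ← neg_one_smul R Y]
  exact (rank_add_le X _).trans (Nat.add_le_add_left (rank_smul_le _ Y) _)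

end Matrix

section Measurement

variable {D K : ℕ} (A : Fin K → Matrix (Fin D) (Fin D) ℂ)

noncomputable def normalizedMeasurement :
    Matrix (Fin D) (Fin D) ℂ →ₗ[ℂ] EuclideanSpace ℂ (Fin K) where
  toFun ρ := WithLp.toLp 2 fun k => (√((D : ℝ) / K) : ℂ) * trace (A k * ρ)
  map_add' X Y := by
    ext k
    simp [trace_add, mul_add]
  map_smul' c X := by
    ext k
    simp only [Matrix.mul_smul, trace_smul, smul_eq_mul, RingHom.id_apply, PiLp.smul_apply]
    ring

/-- The paper's `(D/K) 𝒜*𝒜`, with `𝒜*` applied to complex vectors. -/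
noncomputable def normalMap (Z : Matrix (Fin D) (Fin D) ℂ) : Matrix (Fin D) (Fin D) ℂ :=
  ((D : ℂ) / K) • ∑ k, trace (A k * Z) • A k

theorem norm_normalizedMeasurement_sq (ρ : Matrix (Fin D) (Fin D) ℂ) :
    ‖normalizedMeasurement A ρ‖ ^ 2 = (D : ℝ) / K * ∑ k, ‖trace (A k * ρ)‖ ^ 2 := by
  simp only [EuclideanSpace.norm_sq_eq, normalizedMeasurement, LinearMap.coe_mk, AddHom.coe_mk,
    norm_mul, Complex.norm_real, Real.norm_eq_abs, mul_pow, sq_abs,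
    Real.sq_sqrt (by positivity : (0 : ℝ) ≤ D / K), ← Finset.mul_sum]

theorem trace_conjTranspose_mul_normalMap (hA : ∀ k, (A k).IsHermitian)
    (W Z : Matrix (Fin D) (Fin D) ℂ) :
    trace (Wᴴ * normalMap A Z) = ⟪normalizedMeasurement A W, normalizedMeasurement A Z⟫_ℂ := by
  have hconj (k : Fin K) : trace (Wᴴ * A k) = conj (trace (A k * W)) := by
    rw [← (hA k).eq, ← conjTranspose_mul, trace_conjTranspose, (hA k).eq]
    rfl
  have hsqrt : (√((D : ℝ) / K) : ℂ) * √((D : ℝ) / K) = (D : ℂ) / K := by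
    rw [← Complex.ofReal_mul, Real.mul_self_sqrt (by positivity)]
    push_cast
    rfl
  simp only [normalMap, PiLp.inner_apply, RCLike.inner_apply', normalizedMeasurement,
    LinearMap.coe_mk, AddHom.coe_mk, Matrix.mul_smul, trace_smul, trace_sum,
    smul_eq_mul, Finset.mul_sum, map_mul, Complex.conj_ofReal, hconj]
  refine Finset.sum_congr rfl fun k _ => ?_
  rw [← hsqrt]
  ring

variable {A} {s : ℕ} {δ : ℝ}

theorem IsRIP.abs_norm_sq_sub_le (hRIP : IsRIP A s δ) {ρ : Matrix (Fin D) (Fin D) ℂ}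
    (hρ : ρ.rank ≤ s) :
    |‖normalizedMeasurement A ρ‖ ^ 2 - ‖toEuclideanVec ρ‖ ^ 2| ≤ δ * ‖toEuclideanVec ρ‖ ^ 2 := by
  obtain ⟨hlower, hupper⟩ := hRIP ρ hρ
  rw [norm_normalizedMeasurement_sq, norm_toEuclideanVec, abs_le]
  constructor <;> linarith

theorem IsRIP.abs_re_inner_sub_le (hRIP : IsRIP A s δ) {W Z : Matrix (Fin D) (Fin D) ℂ}
    (hWZ : W.rank + Z.rank ≤ s) :
    |(⟪normalizedMeasurement A W, normalizedMeasurement A Z⟫_ℂ).re - (trace (Wᴴ * Z)).re|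
      ≤ δ * frobNorm W * frobNorm Z := by
  rw [← inner_toEuclideanVec, ← norm_toEuclideanVec, ← norm_toEuclideanVec]
  refine abs_re_inner_sub_re_inner_le _ _ fun a b => hRIP.abs_norm_sq_sub_le ?_
  exact (rank_add_le _ _).trans ((add_le_add (rank_smul_le _ W) (rank_smul_le _ Z)).trans hWZ)

end Measurement

section Gradient

variable {D K n : ℕ} {A : Fin K → Matrix (Fin D) (Fin D) ℂ} {s : ℕ} {δ : ℝ}

theorem IsRIP.frobNorm_normalMap_sub_mul_le (hRIP : IsRIP A s δ) (hA : ∀ k, (A k).IsHermitian)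
    (hδ : 0 ≤ δ) {Z : Matrix (Fin D) (Fin D) ℂ} (hZ : Z.rank + n ≤ s)
    (U : Matrix (Fin D) (Fin n) ℂ) :
    frobNorm ((normalMap A Z - Z) * U) ≤ δ * frobNorm Z * frobNorm U := by
  set V := (normalMap A Z - Z) * U with hVdef
  clear_value V
  have hrank : (V * Uᴴ).rank + Z.rank ≤ s := by
    have : (V * Uᴴ).rank ≤ n :=
      (rank_mul_le_right V Uᴴ).trans ((rank_conjTranspose U).trans_le (rank_le_width U))
    omega
  have hsq : frobNorm V ^ 2 = (trace ((V * Uᴴ)ᴴ * (normalMap A Z - Z))).re := by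
    rw [frobNorm_sq, conjTranspose_mul, conjTranspose_conjTranspose, Matrix.mul_assoc,
      trace_mul_comm U, Matrix.mul_assoc, ← hVdef]
  have hbound : frobNorm V ^ 2 ≤ δ * frobNorm (V * Uᴴ) * frobNorm Z := by
    rw [hsq, Matrix.mul_sub, trace_sub, Complex.sub_re, trace_conjTranspose_mul_normalMap A hA]
    exact (le_abs_self _).trans (hRIP.abs_re_inner_sub_le hrank)
  have hVU : frobNorm (V * Uᴴ) ≤ frobNorm V * frobNorm U :=
    (frobNorm_mul_le V Uᴴ).trans_eq (by rw [frobNorm_conjTranspose])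
  have hVV : frobNorm V * frobNorm V ≤ δ * frobNorm Z * frobNorm U * frobNorm V :=
    calc frobNorm V * frobNorm V = frobNorm V ^ 2 := (sq _).symm
      _ ≤ δ * frobNorm (V * Uᴴ) * frobNorm Z := hbound
      _ ≤ δ * (frobNorm V * frobNorm U) * frobNorm Z := by
        have := frobNorm_nonneg Z
        gcongr
      _ = δ * frobNorm Z * frobNorm U * frobNorm V := by ring
  rcases (frobNorm_nonneg V).eq_or_lt with hV | hV
  · rw [← hV]
    exact mul_nonneg (mul_nonneg hδ (frobNorm_nonneg Z)) (frobNorm_nonneg U)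
  · exact le_of_mul_le_mul_right hVV hV

theorem wGrad_sub_eq {r : ℕ} (yhat e : Fin K → ℝ) {ρ : Matrix (Fin D) (Fin D) ℂ}
    (he : ∀ k, (e k : ℂ) = (yhat k : ℂ) - trace (A k * ρ)) (U : Matrix (Fin D) (Fin r) ℂ) :
    wGrad A yhat U - (U * Uᴴ - ρ) * U
      = (normalMap A (U * Uᴴ - ρ) - (U * Uᴴ - ρ)) * U - ((D : ℂ) / K) • (adjointMap A e * U) := by
  have hcoef (k : Fin K) :
      trace (A k * (U * Uᴴ)) - (yhat k : ℂ) = trace (A k * (U * Uᴴ - ρ)) - (e k : ℂ) := by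
    rw [he k, Matrix.mul_sub, trace_sub]
    ring
  simp only [wGrad, normalMap, adjointMap, hcoef, sub_smul, Finset.sum_sub_distrib,
    Matrix.sub_mul, Matrix.smul_mul, Matrix.sum_mul, smul_sub]
  abel

end Gradient

theorem stmt_10_general {D K r : ℕ}
    (A : Fin K → Matrix (Fin D) (Fin D) ℂ) (hA : ∀ k, (A k).IsHermitian)
    (Ustar : Matrix (Fin D) (Fin r) ℂ) (hUstar : frobNorm Ustar = 1)
    (δ : ℝ) (hδ0 : 0 ≤ δ) (hRIP : IsRIP A (3 * r) δ)
    (yhat e : Fin K → ℝ)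
    (he : ∀ k, (e k : ℂ) = (yhat k : ℂ) - Matrix.trace (A k * (Ustar * Ustarᴴ)))
    (U : Matrix (Fin D) (Fin r) ℂ) (R : Matrix (Fin r) (Fin r) ℂ)
    (hRunit : Rᴴ * R = 1)
    (hclose : frobNorm (U - Ustar * R) ≤ sigmaMin Ustar / 4) :
    frobNorm (wGrad A yhat U - (U * Uᴴ - Ustar * Ustarᴴ) * U) ≤
      5 * δ / 2 * frobNorm (U * Uᴴ - Ustar * Ustarᴴ)
        + 5 * (D : ℝ) / (4 * (K : ℝ)) * specNorm (adjointMap A e) := by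
  set Z := U * Uᴴ - Ustar * Ustarᴴ
  have hZ : Z.rank + r ≤ 3 * r := by
    have : Z.rank ≤ (U * Uᴴ).rank + (Ustar * Ustarᴴ).rank := rank_sub_le _ _
    have := (rank_mul_le_left U Uᴴ).trans (rank_le_width U)
    have := (rank_mul_le_left Ustar Ustarᴴ).trans (rank_le_width Ustar)
    omega
  have hU : frobNorm U ≤ 5 / 4 := by
    have hσ : sigmaMin Ustar ≤ 1 := hUstar ▸ sigmaMin_le_frobNorm Ustar
    have := frobNorm_add_le (U - Ustar * R) (Ustar * R)
    rw [sub_add_cancel, frobNorm_mul_unitary Ustar hRunit, hUstar] at this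
    linarith
  have hnoise : frobNorm (((D : ℂ) / K) • (adjointMap A e * U))
      ≤ D / K * specNorm (adjointMap A e) * frobNorm U := by
    rw [frobNorm_smul, mul_assoc, norm_div, Complex.norm_natCast, Complex.norm_natCast]
    exact mul_le_mul_of_nonneg_left (frobNorm_mul_le_specNorm_mul _ U) (by positivity)
  rw [wGrad_sub_eq yhat e he U]
  calc _ ≤ δ * frobNorm Z * frobNorm U + D / K * specNorm (adjointMap A e) * frobNorm U :=
        (frobNorm_sub_le _ _).trans
          (add_le_add (hRIP.frobNorm_normalMap_sub_mul_le hA hδ0 hZ U) hnoise)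
    _ ≤ δ * frobNorm Z * (5 / 4) + D / K * specNorm (adjointMap A e) * (5 / 4) := by
        have := frobNorm_nonneg Z
        have : 0 ≤ specNorm (adjointMap A e) := norm_nonneg _
        gcongr
    _ ≤ _ := by
        have : 0 ≤ δ * frobNorm Z := mul_nonneg hδ0 (frobNorm_nonneg Z)
        rw [show 5 * (D : ℝ) / (4 * K) = D / K * (5 / 4) by ring]
        linarith

/-- Gradient approximation bound. -/
theorem stmt_10 {D K r : ℕ} (hD : 0 < D) (hK : 0 < K) (hr : 0 < r) (hrD : r ≤ D)
    (A : Fin K → Matrix (Fin D) (Fin D) ℂ) (hA : ∀ k, (A k).IsHermitian)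
    (Ustar : Matrix (Fin D) (Fin r) ℂ) (hUstar : frobNorm Ustar = 1)
    (δ : ℝ) (hδ0 : 0 ≤ δ) (hδ1 : δ < 1) (hRIP : IsRIP A (3 * r) δ)
    (yhat e : Fin K → ℝ)
    (he : ∀ k, (e k : ℂ) = (yhat k : ℂ) - Matrix.trace (A k * (Ustar * Ustarᴴ)))
    (U : Matrix (Fin D) (Fin r) ℂ) (R : Matrix (Fin r) (Fin r) ℂ)
    (hRunit : Rᴴ * R = 1)
    (hRmin : ∀ R' : Matrix (Fin r) (Fin r) ℂ, R'ᴴ * R' = 1 →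
      frobNorm (U - Ustar * R) ≤ frobNorm (U - Ustar * R'))
    (hclose : frobNorm (U - Ustar * R) ≤ sigmaMin Ustar / 4) :
    frobNorm (wGrad A yhat U - (U * Uᴴ - Ustar * Ustarᴴ) * U) ≤
      5 * δ / 2 * frobNorm (U * Uᴴ - Ustar * Ustarᴴ)
        + 5 * (D : ℝ) / (4 * (K : ℝ)) * specNorm (adjointMap A e) :=
  stmt_10_general A hA Ustar hUstar δ hδ0 hRIP yhat e he U R hRunit hclose
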